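/- arXiv:0801.3850 — 4 statements merged into one kernel-verified Lean document; each statement's English description precedes it below -/
import Mathlib

section
/- Let m, n ≥ 1 be integers, δ ∈ (0,1], λ_1, …, λ_m real numbers with λ_i² ≤ 1 − δ for every i, and h(i,k,α) real numbers for 1 ≤ i,k ≤ m and 1 ≤ α ≤ n. For 1 ≤ i,k,j ≤ m set H(i,k,j) = h(i,k,j) if j ≤ n and H(i,k,j) = 0 if j > n. Then ∑_{i,k=1}^m ∑_{α=1}^n h(i,k,α)² − ∑_{i,k=1}^m λ_i² H(i,k,i)² − 2 ∑_{k=1}^m ∑_{1 ≤ i < j ≤ m} λ_i λ_j H(i,k,j) H(j,k,i) ≥ δ · ∑_{i,k=1}^m ∑_{α=1}^n h(i,k,α)². -/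
/-!
The left-hand side minus `‖B‖²` is `-∑_k ∑_{i,j} a_{ij} a_{ji}` with `a_{ij} = λ_j H(i,k,j)`:
the diagonal terms and the symmetric pairs `i < j` together form the full double sum.
Since `2 a_{ij} a_{ji} ≤ a_{ij}² + a_{ji}²`, this double sum is at most `∑_{i,j} λ_j² H(i,k,j)²`,
and `λ_j² ≤ 1 - δ` together with `∑_j H(i,k,j)² ≤ ∑_α h(i,k,α)²` bounds it by `(1 - δ) ‖B‖²`.
-/

/-- Extension of the second-fundamental-form components `h i k α` (`α < n`) by zero to
a third index ranging over `Fin m`: `H(i,k,j) = h(i,k,j)` if `j ≤ n`, and `0` if `j > n`. -/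
def Hext {m n : ℕ} (h : Fin m → Fin m → Fin n → ℝ) (i k j : Fin m) : ℝ :=
  if hj : (j : ℕ) < n then h i k ⟨j, hj⟩ else 0

open Finset

theorem Finset.sum_sum_eq_sum_diag_add_two_mul_sum_lt {ι R : Type*} [Fintype ι] [LinearOrder ι]
    [NonAssocSemiring R] (g : ι → ι → R) (hg : ∀ i j, g i j = g j i) :
    ∑ i, ∑ j, g i j = ∑ i, g i i + 2 * ∑ i, ∑ j, if i < j then g i j else 0 := by
  have htrichotomy : ∀ i j, g i j = (if i = j then g i j else 0) +
      ((if i < j then g i j else 0) + (if j < i then g i j else 0)) := by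
    intro i j
    rcases lt_trichotomy i j with hij | rfl | hij
    · simp [hij, hij.ne, hij.not_gt]
    · simp
    · simp [hij, hij.ne', hij.not_gt]
  have hlower : ∑ i, ∑ j, (if j < i then g i j else 0) = ∑ i, ∑ j, if i < j then g i j else 0 := by
    rw [sum_comm]
    exact sum_congr rfl fun i _ => sum_congr rfl fun j _ => by rw [hg]
  rw [sum_congr rfl fun i _ => sum_congr rfl fun j _ => htrichotomy i j]
  simp only [sum_add_distrib, sum_ite_eq, mem_univ, if_true, hlower, two_mul]

theorem Finset.sum_sum_mul_swap_le_sum_sum_sq {ι R : Type*} [Fintype ι] [CommRing R]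
    [LinearOrder R] [IsStrictOrderedRing R] (a : ι → ι → R) :
    ∑ i, ∑ j, a i j * a j i ≤ ∑ i, ∑ j, a i j ^ 2 := by
  have hswap : ∑ i, ∑ j, a j i ^ 2 = ∑ i, ∑ j, a i j ^ 2 := sum_comm
  have hamgm : 2 * ∑ i, ∑ j, a i j * a j i ≤ ∑ i, ∑ j, (a i j ^ 2 + a j i ^ 2) := by
    simp only [mul_sum, ← mul_assoc]
    exact sum_le_sum fun i _ => sum_le_sum fun j _ => two_mul_le_add_sq _ _
  simp only [sum_add_distrib, hswap] at hamgm
  linarith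

theorem Finset.sum_range_le_sum_range_of_eq_zero {R : Type*} [AddCommMonoid R] [PartialOrder R]
    [IsOrderedAddMonoid R] {F : ℕ → R} {m n : ℕ} (hF : ∀ t, 0 ≤ F t) (hFn : ∀ t, n ≤ t → F t = 0) :
    ∑ t ∈ range m, F t ≤ ∑ t ∈ range n, F t := by
  rcases le_total m n with hmn | hnm
  · exact sum_le_sum_of_subset_of_nonneg (range_subset_range.2 hmn) fun t _ _ => hF t
  · refine (sum_subset (range_subset_range.2 hnm) fun t _ ht => hFn t ?_).ge
    simpa using ht

theorem sum_Hext_sq_le {m n : ℕ} (h : Fin m → Fin m → Fin n → ℝ) (i k : Fin m) :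
    ∑ j, Hext h i k j ^ 2 ≤ ∑ α, h i k α ^ 2 := by
  let F : ℕ → ℝ := fun t => if ht : t < n then h i k ⟨t, ht⟩ ^ 2 else 0
  have hle : ∑ t ∈ range m, F t ≤ ∑ t ∈ range n, F t :=
    sum_range_le_sum_range_of_eq_zero (fun t => by unfold F; split_ifs <;> positivity)
      fun t ht => dif_neg ht.not_gt
  rw [← Fin.sum_univ_eq_sum_range, ← Fin.sum_univ_eq_sum_range] at hle
  convert hle using 2 with j _ α _
  · unfold Hext F; split_ifs <;> simp
  · simp [F]

theorem sum_mul_Hext_sq_le {m n : ℕ} {c : ℝ} {lam : Fin m → ℝ} (hlam : ∀ j, lam j ^ 2 ≤ c)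
    (h : Fin m → Fin m → Fin n → ℝ) (i k : Fin m) :
    ∑ j, lam j ^ 2 * Hext h i k j ^ 2 ≤ c * ∑ α, h i k α ^ 2 := by
  have hc : 0 ≤ c := (sq_nonneg _).trans (hlam i)
  calc ∑ j, lam j ^ 2 * Hext h i k j ^ 2 ≤ ∑ j, c * Hext h i k j ^ 2 := by
        gcongr with j; exact hlam j
    _ = c * ∑ j, Hext h i k j ^ 2 := by rw [mul_sum]
    _ ≤ c * ∑ α, h i k α ^ 2 := by gcongr; exact sum_Hext_sq_le h i k

theorem key_inequality_general (m n : ℕ)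
    (δ : ℝ)
    (lam : Fin m → ℝ) (hlam : ∀ i, lam i ^ 2 ≤ 1 - δ)
    (h : Fin m → Fin m → Fin n → ℝ) :
    δ * (∑ i, ∑ k, ∑ α, h i k α ^ 2) ≤
      (∑ i, ∑ k, ∑ α, h i k α ^ 2) - (∑ i, ∑ k, lam i ^ 2 * Hext h i k i ^ 2) -
        2 * ∑ k, ∑ i, ∑ j,
          if i < j then lam i * lam j * Hext h i k j * Hext h j k i else 0 := by
  let a : Fin m → Fin m → Fin m → ℝ := fun k i j => lam j * Hext h i k j
  have hpairs : ∀ k, ∑ i, lam i ^ 2 * Hext h i k i ^ 2 +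
      2 * ∑ i, ∑ j, (if i < j then lam i * lam j * Hext h i k j * Hext h j k i else 0) =
      ∑ i, ∑ j, a k i j * a k j i := by
    intro k
    rw [sum_sum_eq_sum_diag_add_two_mul_sum_lt _ fun i j => mul_comm _ _]
    congr 1
    · exact sum_congr rfl fun i _ => by ring
    · exact congrArg _ (sum_congr rfl fun i _ => sum_congr rfl fun j _ => by split_ifs <;> ring)
  have hbound : ∑ k, ∑ i, ∑ j, a k i j * a k j i ≤ (1 - δ) * ∑ i, ∑ k, ∑ α, h i k α ^ 2 :=
    calc ∑ k, ∑ i, ∑ j, a k i j * a k j i ≤ ∑ k, ∑ i, ∑ j, a k i j ^ 2 :=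
          sum_le_sum fun k _ => sum_sum_mul_swap_le_sum_sum_sq (a k)
      _ = ∑ i, ∑ k, ∑ j, lam j ^ 2 * Hext h i k j ^ 2 := by
          rw [sum_comm]; simp only [a, mul_pow]
      _ ≤ ∑ i, ∑ k, (1 - δ) * ∑ α, h i k α ^ 2 := by
          gcongr with i _ k _; exact sum_mul_Hext_sq_le hlam h i k
      _ = (1 - δ) * ∑ i, ∑ k, ∑ α, h i k α ^ 2 := by simp only [mul_sum]
  have hsplit := sum_congr rfl fun k (_ : k ∈ univ) => hpairs k
  rw [sum_add_distrib, ← mul_sum] at hsplit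
  have hdiag : ∑ i, ∑ k, lam i ^ 2 * Hext h i k i ^ 2 = ∑ k, ∑ i, lam i ^ 2 * Hext h i k i ^ 2 :=
    sum_comm
  linarith

/-- **The key algebraic inequality (4.5) of the paper.**  If `λ_i² ≤ 1 - δ` for all `i`
(with `0 < δ ≤ 1`), then
`‖B‖² - ∑_{i,k} λ_i² H(i,k,i)² - 2 ∑_k ∑_{i<j} λ_i λ_j H(i,k,j) H(j,k,i) ≥ δ ‖B‖²`,
where `‖B‖² = ∑_{i,k,α} h(i,k,α)²`. -/
theorem key_inequality (m n : ℕ) (hm : 1 ≤ m) (hn : 1 ≤ n)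
    (δ : ℝ) (hδ0 : 0 < δ) (hδ1 : δ ≤ 1)
    (lam : Fin m → ℝ) (hlam : ∀ i, lam i ^ 2 ≤ 1 - δ)
    (h : Fin m → Fin m → Fin n → ℝ) :
    δ * (∑ i, ∑ k, ∑ α, h i k α ^ 2) ≤
      (∑ i, ∑ k, ∑ α, h i k α ^ 2) - (∑ i, ∑ k, lam i ^ 2 * Hext h i k i ^ 2) -
        2 * ∑ k, ∑ i, ∑ j,
          if i < j then lam i * lam j * Hext h i k j * Hext h j k i else 0 :=
  key_inequality_general m n δ lam hlam h
end

section
/- Let n ≥ 1 be an integer, λ_1, λ_2 real numbers with λ_1² ≤ 1 and λ_2² ≤ 1, and h(i,k,α) real numbers for i,k ∈ {1,2} and 1 ≤ α ≤ n, which are symmetric in (i,k) (h(i,k,α) = h(k,i,α)) and trace-free (h(1,1,α) + h(2,2,α) = 0 for every α). For i,k,j ∈ {1,2} set H(i,k,j) = h(i,k,j) if j ≤ n and H(i,k,j) = 0 if j > n. Then ∑_{i,k=1}^2 ∑_{α=1}^n h(i,k,α)² − 2 λ_1 λ_2 [ H(1,1,1)H(1,2,2) + H(1,2,1)H(2,2,2)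 + H(1,1,2)H(1,2,1) + H(1,2,2)H(2,2,1) ] − 2 ∑_{i,k=1}^2 λ_i² H(i,k,i)² ≥ 0. -/
/-!
Write `a = h(1,1,·)` and `b = h(1,2,·)`; symmetry and trace-freeness force `h(2,1,·) = b` and
`h(2,2,·) = -a`. In these coordinates the bracket multiplying `λ₁λ₂` cancels identically,
`‖B‖² = 2 ∑_α (a_α² + b_α²)`, and `∑_{i,k} H(i,k,i)² = ∑_{j ≤ min(2,n)} (a_j² + b_j²)`.
Since `λ_i² ≤ 1`, the last term of the inequality is at most twice the latter, hence at most `‖B‖²`.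
-/

/-- Extension of the second-fundamental-form components `h i k α` (`α < n`) by zero to
a third index ranging over `Fin 2`: `H(i,k,j) = h(i,k,j)` if `j ≤ n`, and `0` if `j > n`.
(Indices are 0-based: `0, 1` stand for the paper's `1, 2`.) -/
def Hext2 {n : ℕ} (h : Fin 2 → Fin 2 → Fin n → ℝ) (i k : Fin 2) (j : Fin 2) : ℝ :=
  if hj : (j : ℕ) < n then h i k ⟨j, hj⟩ else 0

open Finset

theorem Fin.sum_dite_lt_le {m n : ℕ} (g : Fin n → ℝ) (hg : ∀ α, 0 ≤ g α) :
    ∑ j : Fin m, (if hj : (j : ℕ) < n then g ⟨j, hj⟩ else 0) ≤ ∑ α, g α :=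
  calc ∑ j : Fin m, (if hj : (j : ℕ) < n then g ⟨j, hj⟩ else 0)
      = ∑ α ∈ univ.filter fun α : Fin n ↦ (α : ℕ) < m, g α := by
        refine sum_bij_ne_zero (fun j _ hj ↦ ⟨j, ?_⟩) (fun j _ _ ↦ ?_) (fun _ _ _ _ _ _ he ↦ ?_)
          (fun α hα _ ↦ ?_) (fun j _ hj ↦ ?_)
        · by_contra hjn
          exact hj (dif_neg hjn)
        · simp
        · exact Fin.ext (Fin.mk.inj he)
        · refine ⟨⟨α, (mem_filter.mp hα).2⟩, mem_univ _, ?_, rfl⟩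
          simpa
        · rw [dif_pos]
    _ ≤ ∑ α, g α := sum_le_sum_of_subset_of_nonneg (filter_subset _ _) fun α _ _ ↦ hg α

section Hext2

variable {n : ℕ} (h : Fin 2 → Fin 2 → Fin n → ℝ)

theorem sum_sq_Hext2_le (i k : Fin 2) : ∑ j, Hext2 h i k j ^ 2 ≤ ∑ α, h i k α ^ 2 := by
  have hsq : ∀ j, Hext2 h i k j ^ 2 =
      if hj : (j : ℕ) < n then h i k ⟨j, hj⟩ ^ 2 else 0 := fun j ↦ by
    unfold Hext2; split_ifs <;> simp
  simp only [hsq]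
  exact Fin.sum_dite_lt_le _ fun α ↦ sq_nonneg _

variable {h}

theorem Hext2_comm (hsymm : ∀ i k α, h i k α = h k i α) (i k j : Fin 2) :
    Hext2 h i k j = Hext2 h k i j := by
  simp only [Hext2, hsymm i k]

theorem Hext2_trace (htrace : ∀ α, h 0 0 α + h 1 1 α = 0) (j : Fin 2) :
    Hext2 h 0 0 j + Hext2 h 1 1 j = 0 := by
  unfold Hext2
  split_ifs
  exacts [htrace _, add_zero 0]

theorem Hext2_cross_eq_zero (htrace : ∀ α, h 0 0 α + h 1 1 α = 0) :
    Hext2 h 0 0 0 * Hext2 h 0 1 1 + Hext2 h 0 1 0 * Hext2 h 1 1 1 +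
      Hext2 h 0 0 1 * Hext2 h 0 1 0 + Hext2 h 0 1 1 * Hext2 h 1 1 0 = 0 := by
  linear_combination Hext2 h 0 1 1 * Hext2_trace htrace 0 + Hext2 h 0 1 0 * Hext2_trace htrace 1

theorem sum_sq_eq_two_mul (hsymm : ∀ i k α, h i k α = h k i α)
    (htrace : ∀ α, h 0 0 α + h 1 1 α = 0) :
    ∑ i, ∑ k, ∑ α, h i k α ^ 2 = 2 * ∑ α, (h 0 0 α ^ 2 + h 0 1 α ^ 2) := by
  simp only [Fin.sum_univ_two, ← sum_add_distrib, mul_sum]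
  refine sum_congr rfl fun α _ ↦ ?_
  rw [hsymm 1 0, eq_neg_of_add_eq_zero_right (htrace α)]
  ring

theorem sum_sq_Hext2_diag_eq (hsymm : ∀ i k α, h i k α = h k i α)
    (htrace : ∀ α, h 0 0 α + h 1 1 α = 0) :
    ∑ i, ∑ k, Hext2 h i k i ^ 2 = ∑ j, (Hext2 h 0 0 j ^ 2 + Hext2 h 0 1 j ^ 2) := by
  simp only [Fin.sum_univ_two]
  rw [Hext2_comm hsymm 1 0, eq_neg_of_add_eq_zero_right (Hext2_trace htrace 1)]
  ring

theorem two_mul_sum_sq_Hext2_diag_le (hsymm : ∀ i k α, h i k α = h k i α)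
    (htrace : ∀ α, h 0 0 α + h 1 1 α = 0) :
    2 * ∑ i, ∑ k, Hext2 h i k i ^ 2 ≤ ∑ i, ∑ k, ∑ α, h i k α ^ 2 := by
  rw [sum_sq_Hext2_diag_eq hsymm htrace, sum_sq_eq_two_mul hsymm htrace, sum_add_distrib,
    sum_add_distrib]
  gcongr
  exacts [sum_sq_Hext2_le h 0 0, sum_sq_Hext2_le h 0 1]

end Hext2

theorem surface_inequality_general (n : ℕ) (lam : Fin 2 → ℝ)
    (hlam : ∀ i, lam i ^ 2 ≤ 1)
    (h : Fin 2 → Fin 2 → Fin n → ℝ)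
    (hsymm : ∀ i k α, h i k α = h k i α)
    (htrace : ∀ α, h 0 0 α + h 1 1 α = 0) :
    0 ≤ (∑ i, ∑ k, ∑ α, h i k α ^ 2) -
        2 * lam 0 * lam 1 *
          (Hext2 h 0 0 0 * Hext2 h 0 1 1 + Hext2 h 0 1 0 * Hext2 h 1 1 1 +
            Hext2 h 0 0 1 * Hext2 h 0 1 0 + Hext2 h 0 1 1 * Hext2 h 1 1 0) -
        2 * ∑ i, ∑ k, lam i ^ 2 * Hext2 h i k i ^ 2 := by
  have hweight : ∑ i, ∑ k, lam i ^ 2 * Hext2 h i k i ^ 2 ≤ ∑ i, ∑ k, Hext2 h i k i ^ 2 :=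
    sum_le_sum fun i _ ↦ sum_le_sum fun k _ ↦ mul_le_of_le_one_left (sq_nonneg _) (hlam i)
  rw [Hext2_cross_eq_zero htrace, mul_zero, sub_zero]
  linarith [two_mul_sum_sq_Hext2_diag_le hsymm htrace]

/-- **The algebraic inequality (5.2) of the paper** (surface case `m = 2`).  If the
`h(i,k,α)` are symmetric in `(i,k)` and trace-free, and `λ₁² ≤ 1`, `λ₂² ≤ 1`, then
`‖B‖² - 2 λ₁ λ₂ [H(1,1,1)H(1,2,2) + H(1,2,1)H(2,2,2) + H(1,1,2)H(1,2,1) + H(1,2,2)H(2,2,1)]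
  - 2 ∑_{i,k} λ_i² H(i,k,i)² ≥ 0`. -/
theorem surface_inequality (n : ℕ) (hn : 1 ≤ n) (lam : Fin 2 → ℝ)
    (hlam : ∀ i, lam i ^ 2 ≤ 1)
    (h : Fin 2 → Fin 2 → Fin n → ℝ)
    (hsymm : ∀ i k α, h i k α = h k i α)
    (htrace : ∀ α, h 0 0 α + h 1 1 α = 0) :
    0 ≤ (∑ i, ∑ k, ∑ α, h i k α ^ 2) -
        2 * lam 0 * lam 1 *
          (Hext2 h 0 0 0 * Hext2 h 0 1 1 + Hext2 h 0 1 0 * Hext2 h 1 1 1 +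
            Hext2 h 0 0 1 * Hext2 h 0 1 0 + Hext2 h 0 1 1 * Hext2 h 1 1 0) -
        2 * ∑ i, ∑ k, lam i ^ 2 * Hext2 h i k i ^ 2 :=
  surface_inequality_general n lam hlam h hsymm htrace
end

section
/- Let m ≥ 2 be an integer, c ∈ ℝ, and for r > 0 set φ(r) = c (sinh r)^{1−m} ∫₀^r (sinh t)^{m−1} dt. Then for every r > 0: φ(r)² ≤ c²/(m−1)², and hence ( φ(r)/√(1 + φ(r)²) )² ≤ ( c²/(m−1)² ) / ( 1 + c²/(m−1)² ) < 1. -/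
/-!
Since `(sinh^n)' = n sinh^{n-1} cosh ≥ n sinh^n` on `[0, ∞)`, integrating from `0` gives
`n ∫₀^r sinh^n ≤ sinh^n r`; with `n = m - 1` this says `φ(r) = c q` with `0 ≤ q ≤ 1/(m-1)`.
The remaining bounds follow because `x ↦ x/(1+x)` is increasing and below `1` on `[0, ∞)`.
-/

open Real

lemma nat_mul_sinh_pow_le_mul_cosh {t : ℝ} (ht : 0 ≤ t) (n : ℕ) :
    n * sinh t ^ n ≤ n * sinh t ^ (n - 1) * cosh t := by
  rcases n with _ | k
  · simp
  · rw [pow_succ, add_tsub_cancel_right, mul_assoc]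
    have hsinh : 0 ≤ sinh t := sinh_nonneg_iff.mpr ht
    gcongr
    exact (sinh_lt_cosh t).le

lemma nat_mul_integral_sinh_pow_le (n : ℕ) {r : ℝ} (hr : 0 ≤ r) :
    n * ∫ t in (0 : ℝ)..r, sinh t ^ n ≤ sinh r ^ n := by
  have hderiv : ∀ t ∈ Set.uIcc 0 r,
      HasDerivAt (fun s => sinh s ^ n) (n * sinh t ^ (n - 1) * cosh t) t := fun t _ =>
    ((hasDerivAt_sinh t).pow n).congr_deriv (by ring)
  have hderiv_int : IntervalIntegrable (fun t => n * sinh t ^ (n - 1) * cosh t)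
      MeasureTheory.volume 0 r := by
    apply Continuous.intervalIntegrable; fun_prop
  calc n * ∫ t in (0 : ℝ)..r, sinh t ^ n
      = ∫ t in (0 : ℝ)..r, n * sinh t ^ n := (intervalIntegral.integral_const_mul _ _).symm
    _ ≤ ∫ t in (0 : ℝ)..r, n * sinh t ^ (n - 1) * cosh t :=
        intervalIntegral.integral_mono_on hr
          ((by fun_prop : Continuous fun t => n * sinh t ^ n).intervalIntegrable 0 r)
          hderiv_int
          fun t ht => nat_mul_sinh_pow_le_mul_cosh ht.1 n
    _ = sinh r ^ n - 0 ^ n := by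
        rw [intervalIntegral.integral_eq_sub_of_hasDerivAt hderiv hderiv_int, sinh_zero]
    _ ≤ sinh r ^ n := sub_le_self _ (pow_nonneg le_rfl n)

lemma integral_sinh_pow_div_sinh_pow_mem_Icc {n : ℕ} (hn : 1 ≤ n) {r : ℝ} (hr : 0 < r) :
    (∫ t in (0 : ℝ)..r, sinh t ^ n) / sinh r ^ n ∈ Set.Icc (0 : ℝ) (1 / n) := by
  have hsinh : 0 < sinh r ^ n := pow_pos (sinh_pos_iff.mpr hr) n
  have hn' : (0 : ℝ) < n := by exact_mod_cast hn
  refine ⟨div_nonneg ?_ hsinh.le, ?_⟩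
  · exact intervalIntegral.integral_nonneg hr.le
      fun t ht => pow_nonneg (sinh_nonneg_iff.mpr ht.1) n
  · rw [div_le_div_iff₀ hsinh hn', one_mul, mul_comm]
    exact nat_mul_integral_sinh_pow_le n hr.le

lemma div_sqrt_one_add_sq_sq_le {x A : ℝ} (hx : x ^ 2 ≤ A) :
    (x / √(1 + x ^ 2)) ^ 2 ≤ A / (1 + A) := by
  have hpos : 0 < 1 + x ^ 2 := by positivity
  rw [div_pow, sq_sqrt hpos.le, div_le_div_iff₀ hpos (by linarith)]
  linarith

lemma div_one_add_lt_one {A : ℝ} (hA : 0 ≤ A) : A / (1 + A) < 1 := by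
  rw [div_lt_one (by linarith)]
  linarith

/-- **Uniform gradient bound for the constant-mean-curvature graphs over hyperbolic
space** (Proposition 10 of the paper).  For `m ≥ 2`, `c ∈ ℝ` and
`φ(r) = c (sinh r)^{1-m} ∫₀^r (sinh t)^{m-1} dt`, one has `φ(r)² ≤ c²/(m-1)²` and hence
`(φ/√(1+φ²))² ≤ (c²/(m-1)²)/(1 + c²/(m-1)²) < 1` for every `r > 0`. -/
theorem cmc_graph_gradient_bound (m : ℕ) (hm : 2 ≤ m) (c : ℝ) :
    let φ : ℝ → ℝ := fun r =>
      c * (∫ t in (0 : ℝ)..r, Real.sinh t ^ (m - 1)) / Real.sinh r ^ (m - 1)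
    ∀ r : ℝ, 0 < r →
      φ r ^ 2 ≤ c ^ 2 / ((m : ℝ) - 1) ^ 2 ∧
      (φ r / Real.sqrt (1 + φ r ^ 2)) ^ 2 ≤
        (c ^ 2 / ((m : ℝ) - 1) ^ 2) / (1 + c ^ 2 / ((m : ℝ) - 1) ^ 2) ∧
      (c ^ 2 / ((m : ℝ) - 1) ^ 2) / (1 + c ^ 2 / ((m : ℝ) - 1) ^ 2) < 1 := by
  intro φ r hr
  have hcast : (m : ℝ) - 1 = ((m - 1 : ℕ) : ℝ) := by
    rw [Nat.cast_sub (by omega), Nat.cast_one]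
  obtain ⟨hq0, hq1⟩ := integral_sinh_pow_div_sinh_pow_mem_Icc (n := m - 1) (by omega) hr
  have hφ : φ r ^ 2 ≤ c ^ 2 / ((m : ℝ) - 1) ^ 2 :=
    calc φ r ^ 2 = c ^ 2 * ((∫ t in (0 : ℝ)..r, sinh t ^ (m - 1)) / sinh r ^ (m - 1)) ^ 2 := by
          rw [← mul_pow, ← mul_div_assoc]
      _ ≤ c ^ 2 * (1 / ((m - 1 : ℕ) : ℝ)) ^ 2 := by gcongr
      _ = c ^ 2 / ((m : ℝ) - 1) ^ 2 := by rw [hcast, one_div, inv_pow, div_eq_mul_inv]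
  exact ⟨hφ, div_sqrt_one_add_sq_sq_le hφ, div_one_add_lt_one (by positivity)⟩
end

section
/- Let m ≥ 2 be an integer, and for c ∈ ℝ define f_c(r) = ∫₀^r c ψ(t)/√(1 + c² ψ(t)²) dt for r ≥ 0, where ψ(t) = (sinh t)^{1−m} ∫₀^t (sinh s)^{m−1} ds for t > 0. Then for every fixed r ≥ 0, the map c ↦ f_c(r) + c is a continuous, strictly increasing bijection from ℝ onto ℝ. -/
/-!
The integrand of `f_c(r)` is `F (c ψ t)` with `F x = x / √(1 + x²) = tanh (arsinh x)`, a
continuous increasing function with `|F| ≤ 1`, and `ψ ≥ 0`. Hence `c ↦ f_c(r)` is continuous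
(dominated convergence), nondecreasing, and bounded by `r`; adding the identity makes it
strictly increasing and at bounded distance from `c`, so it tends to `±∞` at `±∞` and is onto
by the intermediate value theorem.
-/

open Real MeasureTheory Filter Set

lemma continuous_div_sqrt_one_add_sq : Continuous fun x : ℝ => x / √(1 + x ^ 2) :=
  continuous_id.div (by fun_prop) fun x => by positivity

lemma abs_div_sqrt_one_add_sq_le_one (x : ℝ) : |x / √(1 + x ^ 2)| ≤ 1 :=
  tanh_arsinh x ▸ (abs_tanh_lt_one _).le

lemma strictMono_div_sqrt_one_add_sq : StrictMono fun x : ℝ => x / √(1 + x ^ 2) := by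
  have hinj : Function.Injective fun x : ℝ => x / √(1 + x ^ 2) := fun x y h => by
    simp only [← tanh_arsinh] at h
    exact arsinh_injective (tanh_injective h)
  -- a continuous injection of `ℝ` is strictly monotone or antitone; `F 0 < F 1` decides
  refine (continuous_div_sqrt_one_add_sq.strictMono_of_inj hinj).resolve_right fun hanti => ?_
  have h := hanti zero_lt_one
  norm_num at h
  linarith [sqrt_nonneg 2]

lemma measurable_integral_sinh_pow_div_sinh_pow (n : ℕ) :
    Measurable fun t => (∫ s in (0 : ℝ)..t, sinh s ^ n) / sinh t ^ n :=
  (intervalIntegral.continuous_primitive (fun a b => (continuous_sinh.pow n).intervalIntegrable a b)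
    0).measurable.div (continuous_sinh.pow n).measurable

lemma integral_sinh_pow_div_sinh_pow_nonneg (n : ℕ) {t : ℝ} (ht : 0 ≤ t) :
    0 ≤ (∫ s in (0 : ℝ)..t, sinh s ^ n) / sinh t ^ n :=
  div_nonneg
    (intervalIntegral.integral_nonneg ht fun _ hs => pow_nonneg (sinh_nonneg_iff.2 hs.1) n)
    (pow_nonneg (sinh_nonneg_iff.2 ht) n)

lemma surjective_add_id_of_abs_le {h : ℝ → ℝ} {B : ℝ} (hh : Continuous h)
    (hB : ∀ c, |h c| ≤ B) : Function.Surjective fun c => h c + c := by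
  refine (hh.add continuous_id).surjective ?_ ?_
  · refine tendsto_atTop_mono (fun c => ?_) (tendsto_atTop_add_const_right _ (-B) tendsto_id)
    simp only [Pi.add_apply, id]
    linarith [(abs_le.1 (hB c)).1]
  · refine tendsto_atBot_mono (fun c => ?_) (tendsto_atBot_add_const_right _ B tendsto_id)
    simp only [Pi.add_apply, id]
    linarith [(abs_le.1 (hB c)).2]

section ScaledIntegral

variable {F φ : ℝ → ℝ} {C r : ℝ}

lemma intervalIntegrable_comp_const_mul (hF : Continuous F) (hFC : ∀ x, |F x| ≤ C)
    (hφ : Measurable φ) (c a b : ℝ) :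
    IntervalIntegrable (fun t => F (c * φ t)) volume a b :=
  (intervalIntegrable_const (c := C)).mono_fun'
    (hF.measurable.comp (hφ.const_mul c)).aestronglyMeasurable
    (Eventually.of_forall fun t => hFC (c * φ t))

lemma continuous_intervalIntegral_comp_const_mul (hF : Continuous F) (hFC : ∀ x, |F x| ≤ C)
    (hφ : Measurable φ) : Continuous fun c => ∫ t in (0 : ℝ)..r, F (c * φ t) :=
  intervalIntegral.continuous_of_dominated_interval (bound := fun _ => C)
    (fun c => (hF.measurable.comp (hφ.const_mul c)).aestronglyMeasurable.restrict)
    (fun c => Eventually.of_forall fun t _ => hFC (c * φ t)) intervalIntegrable_const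
    (Eventually.of_forall fun t _ => hF.comp (continuous_mul_const (φ t)))

lemma monotone_intervalIntegral_comp_const_mul (hF : Continuous F) (hFC : ∀ x, |F x| ≤ C)
    (hFm : Monotone F) (hφ : Measurable φ) (hφ0 : ∀ t ∈ Icc 0 r, 0 ≤ φ t) (hr : 0 ≤ r) :
    Monotone fun c => ∫ t in (0 : ℝ)..r, F (c * φ t) := fun c₁ c₂ hc =>
  intervalIntegral.integral_mono_on hr (intervalIntegrable_comp_const_mul hF hFC hφ c₁ 0 r)
    (intervalIntegrable_comp_const_mul hF hFC hφ c₂ 0 r)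
    fun t ht => hFm (mul_le_mul_of_nonneg_right hc (hφ0 t ht))

lemma abs_intervalIntegral_comp_const_mul_le (hFC : ∀ x, |F x| ≤ C) (hr : 0 ≤ r) (c : ℝ) :
    |∫ t in (0 : ℝ)..r, F (c * φ t)| ≤ C * r := by
  simpa [abs_of_nonneg hr] using
    intervalIntegral.norm_integral_le_of_norm_le_const (a := 0) (b := r)
      fun t _ => (norm_eq_abs (F (c * φ t))).trans_le (hFC (c * φ t))

end ScaledIntegral

theorem cmc_foliation_general (m : ℕ) :
    let ψ : ℝ → ℝ := fun t =>
      (∫ s in (0 : ℝ)..t, Real.sinh s ^ (m - 1)) / Real.sinh t ^ (m - 1)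
    let fc : ℝ → ℝ → ℝ := fun c r =>
      ∫ t in (0 : ℝ)..r, c * ψ t / Real.sqrt (1 + c ^ 2 * ψ t ^ 2)
    ∀ r : ℝ, 0 ≤ r →
      Continuous (fun c => fc c r + c) ∧
      StrictMono (fun c => fc c r + c) ∧
      Function.Bijective (fun c => fc c r + c) := by
  intro ψ fc r hr
  have hψ : Measurable ψ := measurable_integral_sinh_pow_div_sinh_pow (m - 1)
  have hψ0 : ∀ t ∈ Icc 0 r, 0 ≤ ψ t :=
    fun t ht => integral_sinh_pow_div_sinh_pow_nonneg (m - 1) ht.1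
  have hfc : (fun c => fc c r) =
      fun c => ∫ t in (0 : ℝ)..r, (fun x => x / √(1 + x ^ 2)) (c * ψ t) := by
    funext c
    simp only [fc, mul_pow]
  have hcont : Continuous fun c => fc c r :=
    hfc ▸ continuous_intervalIntegral_comp_const_mul continuous_div_sqrt_one_add_sq
      abs_div_sqrt_one_add_sq_le_one hψ
  have hmono : Monotone fun c => fc c r :=
    hfc ▸ monotone_intervalIntegral_comp_const_mul continuous_div_sqrt_one_add_sq
      abs_div_sqrt_one_add_sq_le_one strictMono_div_sqrt_one_add_sq.monotone hψ hψ0 hr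
  have hbound (c : ℝ) : |fc c r| ≤ 1 * r :=
    congrFun hfc c ▸ abs_intervalIntegral_comp_const_mul_le abs_div_sqrt_one_add_sq_le_one hr c
  have hstrict : StrictMono fun c => fc c r + c := hmono.add_strictMono strictMono_id
  exact ⟨hcont.add continuous_id, hstrict, hstrict.injective,
    surjective_add_id_of_abs_le hcont hbound⟩

/-- **The foliation property of the constant-mean-curvature graphs over hyperbolic
space** (Proposition 10 of the paper).  With
`ψ(t) = (sinh t)^{1-m} ∫₀^t (sinh s)^{m-1} ds` and
`f_c(r) = ∫₀^r c ψ(t)/√(1 + c² ψ(t)²) dt`, for every fixed `r ≥ 0` the map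
`c ↦ f_c(r) + c` is a continuous, strictly increasing bijection of `ℝ` onto `ℝ`. -/
theorem cmc_foliation (m : ℕ) (hm : 2 ≤ m) :
    let ψ : ℝ → ℝ := fun t =>
      (∫ s in (0 : ℝ)..t, Real.sinh s ^ (m - 1)) / Real.sinh t ^ (m - 1)
    let fc : ℝ → ℝ → ℝ := fun c r =>
      ∫ t in (0 : ℝ)..r, c * ψ t / Real.sqrt (1 + c ^ 2 * ψ t ^ 2)
    ∀ r : ℝ, 0 ≤ r →
      Continuous (fun c => fc c r + c) ∧
      StrictMono (fun c => fc c r + c) ∧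
      Function.Bijective (fun c => fc c r + c) :=
  cmc_foliation_general m
end
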